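/- Generalized Plancherel identity for the Mellin transform: for ψ₁, ψ₂ ∈ C_c^∞((0,∞)) and β, γ ∈ ℝ, ∫₀^∞ r^{-2β} conj(ψ₁(r)) ψ₂(r) dr/r = ∫_{Re λ = β} conj(Mψ₁(λ+γ)) Mψ₂(λ−γ) d(Im λ). -/

import Mathlib

open MeasureTheory

/-- The Mellin transform `Mψ(λ) = (2π)^{-1/2} ∫₀^∞ r^{-λ} ψ(r) dr/r`. -/
noncomputable def mellinT (ψ : ℝ → ℂ) (lam : ℂ) : ℂ :=
  (Real.sqrt (2 * Real.pi) : ℂ)⁻¹ *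
    ∫ r in Set.Ioi (0 : ℝ), (r : ℂ) ^ (-lam) * ψ r / r

open Real Complex FourierTransform

namespace Stmt14Aux

/-- A smooth compactly supported function, as a Schwartz map. -/
noncomputable def ccSchwartz (f : ℝ → ℂ) (hf : ContDiff ℝ (⊤ : ℕ∞) f) (h : HasCompactSupport f) :
    SchwartzMap ℝ ℂ where
  toFun := f
  smooth' := hf.of_le (by simp)
  decay' := by
    intro k n
    obtain ⟨C, hC⟩ := ((continuous_norm.pow k).mul
      (hf.continuous_iteratedFDeriv (by exact_mod_cast le_top)).norm).bounded_above_of_compact_support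
      ((h.iteratedFDeriv n).norm.mul_left)
    refine ⟨C, fun x => ?_⟩
    have := hC x
    rwa [Pi.mul_apply, Pi.pow_apply, norm_mul, norm_norm, norm_pow, norm_norm] at this

lemma fourier_int (f : ℝ → ℂ) (hf : ContDiff ℝ (⊤ : ℕ∞) f) (h : HasCompactSupport f) :
    Integrable (𝓕 f) := by
  have : 𝓕 f = 𝓕 (ccSchwartz f hf h : ℝ → ℂ) := rfl
  rw [this, ← SchwartzMap.fourier_coe]
  exact SchwartzMap.integrable _

lemma fourier_conj (f : ℝ → ℂ) (u : ℝ) :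
    𝓕 (fun x => (starRingEnd ℂ) (f (-x))) u = (starRingEnd ℂ) (𝓕 f u) := by
  rw [Real.fourier_real_eq_integral_exp_smul,
    Real.fourier_real_eq_integral_exp_smul, ← integral_conj,
    ← integral_neg_eq_self (μ := volume)]
  congr 1
  ext x
  rw [smul_eq_mul, smul_eq_mul, map_mul, ← Complex.exp_conj]
  simp only [map_neg, map_mul, Complex.conj_I, Complex.conj_ofReal]
  push_cast
  ring_nf

/-- Parseval/Plancherel identity for smooth compactly supported functions. -/
lemma parseval {f g : ℝ → ℂ} (hf : ContDiff ℝ (⊤ : ℕ∞) f) (hf' : HasCompactSupport f)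
    (hg : ContDiff ℝ (⊤ : ℕ∞) g) (hg' : HasCompactSupport g) :
    ∫ u : ℝ, (starRingEnd ℂ) (𝓕 f u) * 𝓕 g u = ∫ x : ℝ, (starRingEnd ℂ) (f x) * g x := by
  set F : ℝ → ℂ := fun x => (starRingEnd ℂ) (f (-x)) with hF
  have hFc : Continuous F := Complex.continuous_conj.comp (hf.continuous.comp continuous_neg)
  have hFcs : HasCompactSupport F := by
    have : HasCompactSupport fun x => f (-x) := hf'.comp_homeomorph (Homeomorph.neg ℝ)
    exact this.comp_left (map_zero _)
  have hFint : Integrable F := hFc.integrable_of_hasCompactSupport hFcs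
  have hgint : Integrable g := hg.continuous.integrable_of_hasCompactSupport hg'
  have hGint : Integrable (𝓕 g) := fourier_int g hg hg'
  have hflip : (innerₗ ℝ).flip = innerₗ ℝ :=
    LinearMap.ext fun x => LinearMap.ext fun y => real_inner_comm x y
  have mult : ∫ u : ℝ, (𝓕 F u) * (𝓕 g) u = ∫ x : ℝ, F x * 𝓕 (𝓕 g) x := by
    have := VectorFourier.integral_bilin_fourierIntegral_eq_flip
      (E := ℂ) (F := ℂ) (G := ℂ) (V := ℝ) (W := ℝ) (μ := volume) (ν := volume)
      (L := innerₗ ℝ) (f := F) (g := 𝓕 g)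
      (ContinuousLinearMap.mul ℂ ℂ) Real.continuous_fourierChar continuous_inner hFint hGint
    rw [hflip] at this
    exact this
  have inv : ∀ x : ℝ, 𝓕 (𝓕 g) x = g (-x) := by
    intro x
    rw [show 𝓕 (𝓕 g) x = 𝓕⁻ (𝓕 g) (-x) by
      rw [Real.fourierInv_eq_fourier_neg, neg_neg],
      hg.continuous.fourierInv_fourier_eq hgint hGint]
  calc ∫ u : ℝ, (starRingEnd ℂ) (𝓕 f u) * 𝓕 g u = ∫ u : ℝ, (𝓕 F u) * (𝓕 g) u := by
        simp_rw [hF, fourier_conj]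
    _ = ∫ x : ℝ, F x * 𝓕 (𝓕 g) x := mult
    _ = ∫ x : ℝ, (starRingEnd ℂ) (f (-x)) * g (-x) := by simp_rw [inv]; rfl
    _ = ∫ x : ℝ, (starRingEnd ℂ) (f x) * g x :=
        integral_neg_eq_self (fun x => (starRingEnd ℂ) (f x) * g x) volume

lemma integral_Ioi_eq_exp (g : ℝ → ℂ) :
    ∫ r in Set.Ioi (0 : ℝ), g r = ∫ x : ℝ, (rexp x : ℂ) * g (rexp x) := by
  have himg : rexp '' Set.univ = Set.Ioi 0 := by
    rw [Set.image_univ, Real.range_exp]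
  rw [← himg, integral_image_eq_integral_abs_deriv_smul MeasurableSet.univ
    (fun x _ => (Real.hasDerivAt_exp x).hasDerivWithinAt) Real.exp_injective.injOn g]
  rw [setIntegral_univ]
  congr 1
  ext x
  rw [abs_of_pos (Real.exp_pos x), Complex.real_smul]

lemma cpow_exp_eq (x : ℝ) (s : ℂ) : (rexp x : ℂ) ^ s = Complex.exp (s * x) := by
  rw [Complex.ofReal_exp, Complex.cpow_def_of_ne_zero (Complex.exp_ne_zero _),
    Complex.log_exp (by rw [Complex.ofReal_im]; exact neg_lt_zero.mpr Real.pi_pos)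
      (by rw [Complex.ofReal_im]; exact Real.pi_nonneg), mul_comm]

/-- The auxiliary function `x ↦ exp(-a x) ψ(exp x)`. -/
noncomputable def gAux (ψ : ℝ → ℂ) (a : ℝ) : ℝ → ℂ :=
  fun x => (rexp (-(a * x)) : ℂ) * ψ (rexp x)

lemma gAux_smooth (ψ : ℝ → ℂ) (hψ : ContDiff ℝ (⊤ : ℕ∞) ψ) (a : ℝ) : ContDiff ℝ (⊤ : ℕ∞) (gAux ψ a) :=
  (Complex.ofRealCLM.contDiff.comp
    (Real.contDiff_exp.comp ((contDiff_const.mul contDiff_id).neg))).mul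
    (hψ.comp Real.contDiff_exp)

lemma gAux_support (ψ : ℝ → ℂ) (hs : HasCompactSupport ψ) (hss : tsupport ψ ⊆ Set.Ioi 0)
    (a : ℝ) : HasCompactSupport (gAux ψ a) := by
  have hK : IsCompact (Real.log '' tsupport ψ) :=
    hs.image_of_continuousOn (Real.continuousOn_log.mono
      (fun x hx => Set.mem_compl_singleton_iff.mpr (hss hx).ne'))
  refine HasCompactSupport.intro hK (fun x hx => ?_)
  by_contra hne
  have hψx : ψ (rexp x) ≠ 0 := fun h0 => hne (by simp [gAux, h0])
  exact hx ⟨rexp x, subset_tsupport ψ hψx, Real.log_exp x⟩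

lemma mellinT_eq_fourier (ψ : ℝ → ℂ) (a t : ℝ) :
    mellinT ψ ((a : ℂ) + t * Complex.I) = (Real.sqrt (2 * π) : ℂ)⁻¹ *
      𝓕 (gAux ψ a) (t / (2 * π)) := by
  unfold mellinT gAux
  congr 1
  rw [integral_Ioi_eq_exp, Real.fourier_real_eq_integral_exp_smul]
  congr 1
  ext x
  have h0 : (rexp x : ℂ) ≠ 0 := Complex.ofReal_ne_zero.mpr (Real.exp_ne_zero x)
  rw [cpow_exp_eq, mul_comm ((rexp x : ℂ)), div_mul_cancel₀ _ h0, smul_eq_mul, ← mul_assoc]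
  congr 1
  rw [Complex.ofReal_exp, ← Complex.exp_add]
  congr 1
  have hπ : (π : ℂ) ≠ 0 := Complex.ofReal_ne_zero.mpr Real.pi_ne_zero
  push_cast
  field_simp
  ring

end Stmt14Aux

open Stmt14Aux

theorem stmt_14 (ψ₁ ψ₂ : ℝ → ℂ)
    (h1 : ContDiff ℝ (⊤ : ℕ∞) ψ₁) (h1' : HasCompactSupport ψ₁) (h1'' : tsupport ψ₁ ⊆ Set.Ioi 0)
    (h2 : ContDiff ℝ (⊤ : ℕ∞) ψ₂) (h2' : HasCompactSupport ψ₂) (h2'' : tsupport ψ₂ ⊆ Set.Ioi 0)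
    (β γ : ℝ) :
    (∫ r in Set.Ioi (0 : ℝ),
        (r ^ (-2 * β) : ℝ) * (starRingEnd ℂ) (ψ₁ r) * ψ₂ r / r)
      = ∫ t : ℝ, (starRingEnd ℂ) (mellinT ψ₁ ((β : ℂ) + t * Complex.I + γ)) *
          mellinT ψ₂ ((β : ℂ) + t * Complex.I - γ) := by
  have h2π : (0 : ℝ) < 2 * π := by positivity
  have hsq : ((2 * π : ℝ) : ℂ) = (Real.sqrt (2 * π) : ℂ) * (Real.sqrt (2 * π) : ℂ) := by
    norm_cast
    exact (Real.mul_self_sqrt h2π.le).symm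
  have key : ∀ t : ℝ, (starRingEnd ℂ) (mellinT ψ₁ ((β : ℂ) + t * Complex.I + γ)) *
      mellinT ψ₂ ((β : ℂ) + t * Complex.I - γ)
      = ((2 * π : ℝ) : ℂ)⁻¹ * ((starRingEnd ℂ) (𝓕 (gAux ψ₁ (β + γ)) (t / (2 * π))) *
          𝓕 (gAux ψ₂ (β - γ)) (t / (2 * π))) := by
    intro t
    rw [show (β : ℂ) + t * Complex.I + γ = ((β + γ : ℝ) : ℂ) + t * Complex.I by
        push_cast; ring,
      show (β : ℂ) + t * Complex.I - γ = ((β - γ : ℝ) : ℂ) + t * Complex.I by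
        push_cast; ring,
      mellinT_eq_fourier, mellinT_eq_fourier, map_mul, map_inv₀, Complex.conj_ofReal, hsq,
      mul_inv]
    ring
  rw [show (∫ t : ℝ, (starRingEnd ℂ) (mellinT ψ₁ ((β : ℂ) + t * Complex.I + γ)) *
      mellinT ψ₂ ((β : ℂ) + t * Complex.I - γ))
      = ∫ t : ℝ, ((2 * π : ℝ) : ℂ)⁻¹ * ((starRingEnd ℂ) (𝓕 (gAux ψ₁ (β + γ)) (t / (2 * π))) *
          𝓕 (gAux ψ₂ (β - γ)) (t / (2 * π))) from by simp_rw [key],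
    MeasureTheory.integral_const_mul,
    show (∫ t : ℝ, (starRingEnd ℂ) (𝓕 (gAux ψ₁ (β + γ)) (t / (2 * π))) *
        𝓕 (gAux ψ₂ (β - γ)) (t / (2 * π)))
      = |2 * π| • ∫ u : ℝ, (starRingEnd ℂ) (𝓕 (gAux ψ₁ (β + γ)) u) * 𝓕 (gAux ψ₂ (β - γ)) u from by
      exact Measure.integral_comp_div
        (fun u => (starRingEnd ℂ) (𝓕 (gAux ψ₁ (β + γ)) u) * 𝓕 (gAux ψ₂ (β - γ)) u) (2 * π),
    parseval (gAux_smooth ψ₁ h1 _) (gAux_support ψ₁ h1' h1'' _)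
      (gAux_smooth ψ₂ h2 _) (gAux_support ψ₂ h2' h2'' _),
    abs_of_pos h2π, Complex.real_smul, ← mul_assoc,
    inv_mul_cancel₀ (by exact_mod_cast h2π.ne' : ((2 * π : ℝ) : ℂ) ≠ 0), one_mul,
    integral_Ioi_eq_exp]
  congr 1
  ext x
  have h0 : (rexp x : ℂ) ≠ 0 := Complex.ofReal_ne_zero.mpr (Real.exp_ne_zero x)
  rw [mul_comm ((rexp x : ℂ)), div_mul_cancel₀ _ h0]
  unfold gAux
  rw [map_mul, Complex.conj_ofReal]
  have hexp : (rexp x ^ (-2 * β) : ℝ) = rexp (-((β + γ) * x)) * rexp (-((β - γ) * x)) := by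
    rw [Real.rpow_def_of_pos (Real.exp_pos x), Real.log_exp, ← Real.exp_add]
    ring_nf
  rw [hexp]
  push_cast
  ring
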